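/- Let D,T,σ>0 with T > 4σ^2/D. Then 2 ∫_0^∞ a e^{2a^2/(DT)} (∫_0^T exp(-a^2/(2Dt(1-t/T)))/sqrt(2πDt(1-t/T)) dt) * e^{-a^2/(2σ^2)}/(sqrt(2π)σ) da = Tσ/(sqrt(DT) + 2σ). -/

import Mathlib

/-!
Combining the three exponentials, the integrand is `a * exp (-k t * a ^ 2) * c t` with `k t > 0`
for every `t ∈ (0, T)`: at `t = T / 2` the bridge term exactly cancels `exp (2 a² / (D T))` and the
Gaussian in `σ` supplies the decay. Integrating in `a` first (Fubini) leaves `∫₀ᵀ c / (2 k)`, a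
multiple of `∫₀ᵀ √(t (T - t)) / (σ² (T - 2t)² + D T t (T - t)) dt`. The substitution
`u = (2t - T) / √(t (T - t))`, mapping `(0, T)` onto `ℝ`, turns this into
`∫ 2 / ((4 + u²) (σ² u² + D T)) du`, which partial fractions (available since `D T ≠ 4 σ²`)
evaluate with arctangents.
-/

open MeasureTheory Real Set Filter Topology

theorem integral_Ioi_mul_exp_neg_mul_sq {b : ℝ} (hb : 0 < b) :
    ∫ x in Ioi (0 : ℝ), x * exp (-b * x ^ 2) = (2 * b)⁻¹ := by
  apply Complex.ofReal_injective
  rw [← integral_complex_ofReal]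
  push_cast
  exact integral_mul_cexp_neg_mul_sq (by simpa using hb)

theorem integral_Ioi_integral_mul_exp_neg_mul_sq {α : Type*} [MeasurableSpace α]
    {ν : Measure α} [SFinite ν] {k c : α → ℝ} (hk : Measurable k) (hc : Measurable c)
    (hk_pos : ∀ᵐ t ∂ν, 0 < k t) (hint : Integrable (fun t => c t / (2 * k t)) ν) :
    ∫ x in Ioi (0 : ℝ), ∫ t, x * exp (-k t * x ^ 2) * c t ∂ν = ∫ t, c t / (2 * k t) ∂ν := by
  have hinner : ∀ t, 0 < k t → ∀ d : ℝ,
      ∫ x in Ioi (0 : ℝ), x * exp (-k t * x ^ 2) * d = d / (2 * k t) := fun t ht d => by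
    rw [integral_mul_const, integral_Ioi_mul_exp_neg_mul_sq ht, div_eq_inv_mul]
  have hnorm : ∀ t, 0 < k t → ∫ x in Ioi (0 : ℝ), ‖x * exp (-k t * x ^ 2) * c t‖ =
      ‖c t / (2 * k t)‖ := fun t ht => by
    rw [norm_div, Real.norm_of_nonneg (by positivity : 0 ≤ 2 * k t), ← hinner t ht]
    refine setIntegral_congr_fun measurableSet_Ioi fun x (hx : 0 < x) => ?_
    rw [norm_mul, norm_mul, Real.norm_of_nonneg hx.le, Real.norm_of_nonneg (exp_pos _).le]
  have hprod : Integrable (Function.uncurry fun x t => x * exp (-k t * x ^ 2) * c t)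
      ((volume.restrict (Ioi 0)).prod ν) := by
    refine (integrable_prod_iff' (by fun_prop : Measurable _).aestronglyMeasurable).2
      ⟨hk_pos.mono fun t ht => (integrable_mul_exp_neg_mul_sq ht).integrableOn.mul_const (c t),
        hint.norm.congr (hk_pos.mono fun t ht => (hnorm t ht).symm)⟩
  rw [integral_integral_swap hprod]
  exact integral_congr_ae (hk_pos.mono fun t ht => hinner t ht (c t))

noncomputable def bridgeCoord (T t : ℝ) : ℝ := (2 * t - T) / √(t * (T - t))

section
variable {T : ℝ}

theorem hasDerivAt_bridgeCoord {t : ℝ} (ht : t ∈ Ioo 0 T) :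
    HasDerivAt (bridgeCoord T) (T ^ 2 / (2 * √(t * (T - t)) ^ 3)) t := by
  have hq : 0 < t * (T - t) := mul_pos ht.1 (sub_pos.2 ht.2)
  have hw := sqrt_pos.2 hq
  have hw2 := sq_sqrt hq.le
  have hsqrt : HasDerivAt (fun x => √(x * (T - x))) ((T - 2 * t) / (2 * √(t * (T - t)))) t :=
    (((hasDerivAt_id' t).mul ((hasDerivAt_id' t).const_sub T)).congr_deriv (by ring)).sqrt hq.ne'
  have hnum : HasDerivAt (fun x => 2 * x - T) 2 t := by
    simpa using ((hasDerivAt_id t).const_mul 2).sub_const T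
  refine (hnum.div hsqrt hw.ne').congr_deriv ?_
  field_simp
  linear_combination 4 * hw2

theorem tendsto_sqrt_mul_sub_nhdsWithin_Ioo {x₀ : ℝ} (hx₀ : x₀ * (T - x₀) = 0) :
    Tendsto (fun x => √(x * (T - x))) (𝓝[Ioo 0 T] x₀) (𝓝[>] 0) := by
  refine tendsto_nhdsWithin_iff.2 ⟨?_, eventually_nhdsWithin_of_forall fun x hx =>
    sqrt_pos.2 (mul_pos hx.1 (sub_pos.2 hx.2))⟩
  have : Continuous fun x : ℝ => √(x * (T - x)) := by fun_prop
  simpa [hx₀] using (this.continuousWithinAt (s := Ioo 0 T) (x := x₀)).tendsto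

theorem tendsto_bridgeCoord_nhdsGT_zero (hT : 0 < T) :
    Tendsto (bridgeCoord T) (𝓝[>] 0) atBot := by
  rw [← nhdsWithin_Ioo_eq_nhdsGT hT]
  have hnum : Tendsto (fun x : ℝ => 2 * x - T) (𝓝[Ioo 0 T] 0) (𝓝 (-T)) := by
    have : Continuous fun x : ℝ => 2 * x - T := by fun_prop
    simpa using (this.continuousWithinAt (s := Ioo 0 T) (x := 0)).tendsto
  exact (hnum.neg_mul_atTop (neg_lt_zero.2 hT)
    (tendsto_inv_nhdsGT_zero.comp (tendsto_sqrt_mul_sub_nhdsWithin_Ioo (by ring))))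

theorem tendsto_bridgeCoord_nhdsLT (hT : 0 < T) :
    Tendsto (bridgeCoord T) (𝓝[<] T) atTop := by
  rw [← nhdsWithin_Ioo_eq_nhdsLT hT]
  have hnum : Tendsto (fun x : ℝ => 2 * x - T) (𝓝[Ioo 0 T] T) (𝓝 T) := by
    have : Continuous fun x : ℝ => 2 * x - T := by fun_prop
    convert (this.continuousWithinAt (s := Ioo 0 T) (x := T)).tendsto using 2
    ring
  exact (hnum.pos_mul_atTop hT
    (tendsto_inv_nhdsGT_zero.comp (tendsto_sqrt_mul_sub_nhdsWithin_Ioo (by ring))))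

end

noncomputable def arctanPartialFraction (s r u : ℝ) : ℝ :=
  (arctan (u / 2) - 2 * s / r * arctan (s / r * u)) / (r ^ 2 - 4 * s ^ 2)

section
variable {s r : ℝ}

theorem hasDerivAt_arctanPartialFraction (hr : r ≠ 0) (hrs : r ^ 2 - 4 * s ^ 2 ≠ 0) (u : ℝ) :
    HasDerivAt (arctanPartialFraction s r) (2 / ((4 + u ^ 2) * (s ^ 2 * u ^ 2 + r ^ 2))) u := by
  have h1 := ((hasDerivAt_id' u).div_const 2).arctan
  have h2 := (((hasDerivAt_id' u).const_mul (s / r)).arctan).const_mul (2 * s / r)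
  refine ((h1.sub h2).div_const (r ^ 2 - 4 * s ^ 2)).congr_deriv ?_
  rw [div_eq_iff hrs]
  field_simp
  ring

theorem tendsto_arctanPartialFraction_atTop (hs : 0 < s) (hr : 0 < r)
    (hrs : r ^ 2 - 4 * s ^ 2 ≠ 0) :
    Tendsto (arctanPartialFraction s r) atTop (𝓝 (π / (2 * r * (r + 2 * s)))) := by
  have h1 : Tendsto (fun u => arctan (u / 2)) atTop (𝓝 (π / 2)) :=
    (tendsto_arctan_atTop.mono_right nhdsWithin_le_nhds).comp
      (tendsto_id.atTop_div_const two_pos)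
  have h2 : Tendsto (fun u => arctan (s / r * u)) atTop (𝓝 (π / 2)) :=
    (tendsto_arctan_atTop.mono_right nhdsWithin_le_nhds).comp
      (tendsto_id.const_mul_atTop (div_pos hs hr))
  have hlim : π / (2 * r * (r + 2 * s)) = (π / 2 - 2 * s / r * (π / 2)) / (r ^ 2 - 4 * s ^ 2) := by
    rw [eq_div_iff hrs]
    field_simp
    ring
  rw [hlim]
  exact (h1.sub (h2.const_mul (2 * s / r))).div_const (r ^ 2 - 4 * s ^ 2)

theorem arctanPartialFraction_neg (u : ℝ) :
    arctanPartialFraction s r (-u) = -arctanPartialFraction s r u := by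
  simp only [arctanPartialFraction, neg_div, mul_neg, arctan_neg]
  ring

theorem tendsto_arctanPartialFraction_atBot (hs : 0 < s) (hr : 0 < r)
    (hrs : r ^ 2 - 4 * s ^ 2 ≠ 0) :
    Tendsto (arctanPartialFraction s r) atBot (𝓝 (-(π / (2 * r * (r + 2 * s))))) := by
  refine (((tendsto_arctanPartialFraction_atTop hs hr hrs).comp tendsto_neg_atBot_atTop).neg).congr
    fun u => ?_
  simp [arctanPartialFraction_neg]

end

section
variable {T α β : ℝ}

theorem mul_sq_add_mul_mul_sub_pos (hT : 0 < T) (hα : 0 < α) (hβ : 0 < β) {t : ℝ}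
    (ht : t ∈ Icc 0 T) : 0 < α * (T - 2 * t) ^ 2 + β * (t * (T - t)) := by
  rcases (mul_nonneg ht.1 (sub_nonneg.2 ht.2)).lt_or_eq with hp | hp
  · nlinarith [mul_pos hβ hp, mul_nonneg hα.le (sq_nonneg (T - 2 * t))]
  · have : (T - 2 * t) ^ 2 = T ^ 2 := by linear_combination 4 * hp
    rw [← hp, this]
    positivity

theorem integrableOn_sqrt_mul_sub_div_quadratic (hT : 0 < T) (hα : 0 < α) (hβ : 0 < β) :
    IntegrableOn (fun t => √(t * (T - t)) / (α * (T - 2 * t) ^ 2 + β * (t * (T - t))))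
      (Icc 0 T) :=
  ContinuousOn.integrableOn_Icc <| ContinuousOn.div (by fun_prop) (by fun_prop)
    fun _ ht => (mul_sq_add_mul_mul_sub_pos hT hα hβ ht).ne'

theorem hasDerivAt_arctanPartialFraction_comp_bridgeCoord {s r t : ℝ} (hs : 0 < s) (hr : 0 < r)
    (hrs : r ^ 2 - 4 * s ^ 2 ≠ 0) (ht : t ∈ Ioo 0 T) :
    HasDerivAt (arctanPartialFraction s r ∘ bridgeCoord T)
      (√(t * (T - t)) / (s ^ 2 * (T - 2 * t) ^ 2 + r ^ 2 * (t * (T - t)))) t := by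
  refine ((hasDerivAt_arctanPartialFraction hr.ne' hrs _).comp t
    (hasDerivAt_bridgeCoord ht)).congr_deriv ?_
  have hT : 0 < T := ht.1.trans ht.2
  have hq : 0 < t * (T - t) := mul_pos ht.1 (sub_pos.2 ht.2)
  have hQ := mul_sq_add_mul_mul_sub_pos hT (pow_pos hs 2) (pow_pos hr 2) (Ioo_subset_Icc_self ht)
  simp only [bridgeCoord]
  set w := √(t * (T - t))
  have hw : 0 < w := sqrt_pos.2 hq
  have hw2 : w ^ 2 = t * (T - t) := sq_sqrt hq.le
  rw [← hw2] at hQ ⊢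
  have h4 : 4 + ((2 * t - T) / w) ^ 2 = T ^ 2 / w ^ 2 := by
    field_simp
    linear_combination 4 * hw2
  have h5 : s ^ 2 * ((2 * t - T) / w) ^ 2 + r ^ 2 =
      (s ^ 2 * (T - 2 * t) ^ 2 + r ^ 2 * w ^ 2) / w ^ 2 := by
    field_simp
    ring
  rw [h4, h5]
  field_simp

theorem integral_sqrt_mul_sub_div_quadratic (hT : 0 < T) (hα : 0 < α) (hβ : 0 < β)
    (hαβ : β ≠ 4 * α) :
    ∫ t in Ioo 0 T, √(t * (T - t)) / (α * (T - 2 * t) ^ 2 + β * (t * (T - t))) =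
      π / (√β * (√β + 2 * √α)) := by
  obtain ⟨s, hs, rfl⟩ : ∃ s, 0 < s ∧ s ^ 2 = α := ⟨√α, sqrt_pos.2 hα, sq_sqrt hα.le⟩
  obtain ⟨r, hr, rfl⟩ : ∃ r, 0 < r ∧ r ^ 2 = β := ⟨√β, sqrt_pos.2 hβ, sq_sqrt hβ.le⟩
  have hrs : r ^ 2 - 4 * s ^ 2 ≠ 0 := sub_ne_zero.2 hαβ
  rw [← integral_Ioc_eq_integral_Ioo, ← intervalIntegral.integral_of_le hT.le,
    intervalIntegral.integral_eq_sub_of_hasDerivAt_of_tendsto hT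
      (fun t ht => hasDerivAt_arctanPartialFraction_comp_bridgeCoord hs hr hrs ht)
      ((intervalIntegrable_iff_integrableOn_Icc_of_le hT.le).2
        (integrableOn_sqrt_mul_sub_div_quadratic hT hα hβ))
      ((tendsto_arctanPartialFraction_atBot hs hr hrs).comp (tendsto_bridgeCoord_nhdsGT_zero hT))
      ((tendsto_arctanPartialFraction_atTop hs hr hrs).comp (tendsto_bridgeCoord_nhdsLT hT)),
    sqrt_sq hs.le, sqrt_sq hr.le]
  field_simp
  ring

end

noncomputable def combinedRate (D T σ t : ℝ) : ℝ :=
  (σ ^ 2 * (T - 2 * t) ^ 2 + D * T * (t * (T - t))) / (2 * (D * T) * (t * (T - t)) * σ ^ 2)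

noncomputable def combinedNormalizer (D T σ t : ℝ) : ℝ :=
  (√(2 * π * D * t * (1 - t / T)) * (√(2 * π) * σ))⁻¹

section
variable {D T σ t : ℝ}

theorem combinedRate_pos (hD : 0 < D) (hσ : 0 < σ) (ht : t ∈ Ioo 0 T) :
    0 < combinedRate D T σ t := by
  have hq : 0 < t * (T - t) := mul_pos ht.1 (sub_pos.2 ht.2)
  have hT : 0 < T := ht.1.trans ht.2
  unfold combinedRate
  positivity

theorem integrand_eq_mul_exp_neg_combinedRate (hD : 0 < D) (hσ : 0 < σ)
    (ht : t ∈ Ioo 0 T) (a : ℝ) :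
    a * exp (2 * a ^ 2 / (D * T)) *
        (exp (-a ^ 2 / (2 * D * t * (1 - t / T))) / √(2 * π * D * t * (1 - t / T))) *
        (exp (-a ^ 2 / (2 * σ ^ 2)) / (√(2 * π) * σ)) =
      a * exp (-combinedRate D T σ t * a ^ 2) * combinedNormalizer D T σ t := by
  have hT : 0 < T := ht.1.trans ht.2
  have ht0 : t ≠ 0 := ht.1.ne'
  have hTt : T - t ≠ 0 := (sub_pos.2 ht.2).ne'
  have h1t : 1 - t / T ≠ 0 := by rw [one_sub_div hT.ne']; exact div_ne_zero hTt hT.ne'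
  have hexp : 2 * a ^ 2 / (D * T) + -a ^ 2 / (2 * D * t * (1 - t / T)) + -a ^ 2 / (2 * σ ^ 2) =
      -combinedRate D T σ t * a ^ 2 := by
    unfold combinedRate
    field_simp
    ring
  rw [combinedNormalizer, ← hexp, exp_add, exp_add]
  ring

theorem combinedNormalizer_div_combinedRate (hD : 0 < D) (hσ : 0 < σ) (ht : t ∈ Ioo 0 T) :
    combinedNormalizer D T σ t / (2 * combinedRate D T σ t) =
      σ * T * √(D * T) / (2 * π) *
        (√(t * (T - t)) / (σ ^ 2 * (T - 2 * t) ^ 2 + D * T * (t * (T - t)))) := by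
  have hT : 0 < T := ht.1.trans ht.2
  have hq : 0 < t * (T - t) := mul_pos ht.1 (sub_pos.2 ht.2)
  have hsplit : √(2 * π * D * t * (1 - t / T)) = √(2 * π) * √(D * T) * √(t * (T - t)) / T := by
    rw [show 2 * π * D * t * (1 - t / T) = 2 * π * (D * T) * (t * (T - t)) / T ^ 2 by
      field_simp, sqrt_div' _ (sq_nonneg T), sqrt_sq hT.le, sqrt_mul' _ hq.le,
      sqrt_mul (by positivity)]
  have hπ : √(2 * π) ^ 2 = 2 * π := sq_sqrt (by positivity)
  have hr : √(D * T) ^ 2 = D * T := sq_sqrt (by positivity)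
  have hw : √(t * (T - t)) ^ 2 = t * (T - t) := sq_sqrt hq.le
  rw [combinedNormalizer, combinedRate, hsplit]
  set r := √(D * T)
  set w := √(t * (T - t))
  have hQ : 0 < σ ^ 2 * (T - 2 * t) ^ 2 + D * T * (t * (T - t)) :=
    add_pos_of_nonneg_of_pos (by positivity) (mul_pos (mul_pos hD hT) hq)
  rw [← hr, ← hw] at hQ ⊢
  field_simp
  linear_combination -(r * w) * hπ

end

theorem bb_gaussian_second_term (D T σ : ℝ) (hD : 0 < D) (hT : 0 < T) (hσ : 0 < σ)
    (h : 4 * σ ^ 2 / D < T) :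
    2 * ∫ a in Set.Ioi (0 : ℝ),
        a * Real.exp (2 * a ^ 2 / (D * T)) *
          (∫ t in Set.Ioo (0 : ℝ) T,
            Real.exp (-a ^ 2 / (2 * D * t * (1 - t / T))) /
              Real.sqrt (2 * Real.pi * D * t * (1 - t / T))) *
          (Real.exp (-a ^ 2 / (2 * σ ^ 2)) / (Real.sqrt (2 * Real.pi) * σ))
      = T * σ / (Real.sqrt (D * T) + 2 * σ) := by
  have hDT : 0 < D * T := mul_pos hD hT
  have hDT_ne : D * T ≠ 4 * σ ^ 2 := ((div_lt_iff₀' hD).1 h).ne'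
  have hratio (t) (ht : t ∈ Ioo 0 T) := combinedNormalizer_div_combinedRate hD hσ ht
  have hint : IntegrableOn (fun t => combinedNormalizer D T σ t / (2 * combinedRate D T σ t))
      (Ioo 0 T) := by
    refine IntegrableOn.congr_fun ?_ (fun t ht => (hratio t ht).symm) measurableSet_Ioo
    exact ((integrableOn_sqrt_mul_sub_div_quadratic hT (pow_pos hσ 2) hDT).mono_set
      Ioo_subset_Icc_self).const_mul _
  calc _ = 2 * ∫ a in Ioi 0, ∫ t in Ioo 0 T,
        a * exp (-combinedRate D T σ t * a ^ 2) * combinedNormalizer D T σ t := by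
        congr 1
        refine setIntegral_congr_fun measurableSet_Ioi fun a _ => ?_
        rw [← integral_const_mul, ← integral_mul_const]
        exact setIntegral_congr_fun measurableSet_Ioo fun t ht =>
          integrand_eq_mul_exp_neg_combinedRate hD hσ ht a
    _ = 2 * ∫ t in Ioo 0 T, σ * T * √(D * T) / (2 * π) *
        (√(t * (T - t)) / (σ ^ 2 * (T - 2 * t) ^ 2 + D * T * (t * (T - t)))) := by
        rw [integral_Ioi_integral_mul_exp_neg_mul_sq (by unfold combinedRate; fun_prop)
          (by unfold combinedNormalizer; fun_prop)
          ((ae_restrict_iff' measurableSet_Ioo).2 (.of_forall fun t ht => combinedRate_pos hD hσ ht))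
          hint, setIntegral_congr_fun measurableSet_Ioo hratio]
    _ = T * σ / (√(D * T) + 2 * σ) := by
        rw [integral_const_mul, integral_sqrt_mul_sub_div_quadratic hT (pow_pos hσ 2) hDT hDT_ne,
          sqrt_sq hσ.le]
        field_simp
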